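/- Let S be a bounded operator on a Hilbert space H. If there exist constants A, A' > 0 such that A‖f‖² ≤ |⟨S f, f⟩| and A'‖f‖² ≤ |⟨S* f, f⟩| for all f ∈ H, then S is invertible. -/

import Mathlib

open scoped InnerProductSpace

theorem invertible_of_abs_lower_bounds_self_and_adjoint
    {H : Type*} [NormedAddCommGroup H] [InnerProductSpace ℂ H] [CompleteSpace H]
    (S : H →L[ℂ] H) (A A' : ℝ) (hA : 0 < A) (hA' : 0 < A')
    (hlow : ∀ f : H, A * ‖f‖ ^ 2 ≤ ‖⟪S f, f⟫_ℂ‖)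
    (hlow' : ∀ f : H, A' * ‖f‖ ^ 2 ≤ ‖⟪ContinuousLinearMap.adjoint S f, f⟫_ℂ‖) :
    ∃ T : H →L[ℂ] H, S ∘L T = 1 ∧ T ∘L S = 1 := by
  -- lower bound on ‖S f‖
  have hbound : ∀ f : H, A * ‖f‖ ≤ ‖S f‖ := by
    intro f
    rcases eq_or_ne f 0 with rfl | hf
    · simp
    · have h1 := hlow f
      have h2 : ‖⟪S f, f⟫_ℂ‖ ≤ ‖S f‖ * ‖f‖ := norm_inner_le_norm _ _
      have hfpos : 0 < ‖f‖ := norm_pos_iff.mpr hf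
      nlinarith
  -- injectivity
  have hker : LinearMap.ker (S : H →ₗ[ℂ] H) = ⊥ := by
    rw [LinearMap.ker_eq_bot']
    intro f hf
    have := hbound f
    rw [show S f = 0 from hf] at this
    simp only [norm_zero] at this
    have : ‖f‖ ≤ 0 := by nlinarith
    exact norm_le_zero_iff.mp this
  -- antilipschitz, closed range
  have hanti : AntilipschitzWith (⟨A, hA.le⟩ : NNReal)⁻¹ S := by
    apply ContinuousLinearMap.antilipschitz_of_bound
    intro x
    have := hbound x
    change ‖x‖ ≤ A⁻¹ * ‖S x‖
    rw [le_inv_mul_iff₀ hA]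
    exact this
  have hclosed : IsClosed (Set.range S) := hanti.isClosed_range S.uniformContinuous
  have hclosed' : IsClosed ((LinearMap.range (S : H →ₗ[ℂ] H) : Submodule ℂ H) : Set H) := by
    simpa [LinearMap.coe_range] using hclosed
  haveI : CompleteSpace (LinearMap.range (S : H →ₗ[ℂ] H)) := hclosed'.completeSpace_coe
  -- orthogonal complement of range is trivial
  have horth : (LinearMap.range (S : H →ₗ[ℂ] H))ᗮ = ⊥ := by
    rw [Submodule.eq_bot_iff]
    intro x hx
    have hSx : ⟪S x, x⟫_ℂ = 0 := by
      have := (Submodule.mem_orthogonal _ x).mp hx (S x) (LinearMap.mem_range_self _ x)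
      exact this
    have hadj : ⟪ContinuousLinearMap.adjoint S x, x⟫_ℂ = 0 := by
      rw [ContinuousLinearMap.adjoint_inner_left, ← inner_conj_symm]
      simp [hSx]
    have := hlow' x
    rw [hadj] at this
    simp only [norm_zero] at this
    have h2 : ‖x‖ ^ 2 ≤ 0 := by
      by_contra h
      push_neg at h
      nlinarith
    have h3 : ‖x‖ ^ 2 = 0 := le_antisymm h2 (sq_nonneg _)
    have h4 : ‖x‖ = 0 := (pow_eq_zero_iff two_ne_zero).mp h3
    simpa using norm_eq_zero.mp h4
  have hrange : LinearMap.range (S : H →ₗ[ℂ] H) = ⊤ := by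
    rwa [Submodule.orthogonal_eq_bot_iff] at horth
  -- build the inverse
  let e := ContinuousLinearEquiv.ofBijective S hker hrange
  refine ⟨e.symm.toContinuousLinearMap, ?_, ?_⟩
  · ext x
    have : S (e.symm x) = e (e.symm x) := rfl
    simp [this]
  · ext x
    have : S x = e x := rfl
    simp [this]
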